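/- arXiv:2106.11289 — 2 statements merged into one kernel-verified Lean document; each statement's English description precedes it below -/
import Mathlib

section
/- Let E = B₁ × ⋯ × Bₙ ⊆ Kⁿ be a product of balls (each Bᵢ a ball in K, possibly K itself), and let f : E → E be a contracting map, i.e. v(f(x) − f(y)) < v(x − y) for all x, y ∈ E with x ≠ y. Then f has exactly one fixed point. -/
noncomputable section

open scoped Classical Pointwise

section Preamble

variable {K : Type*} [Field K] {Γ : Type*} [LinearOrderedCommGroupWithZero Γ]

instance (priority := 100) : OrderBot Γ where
  bot := 0
  bot_le _ := zero_le'

/-- The max-valuation on `K^n`: `v(a) = maxᵢ v(aᵢ)`. -/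
def vv (v : Valuation K Γ) {n : ℕ} (x : Fin n → K) : Γ :=
  Finset.univ.sup fun i => v (x i)

/-- `rvEq v x y` expresses `rv(x) = rv(y)` in `RV⁽ⁿ⁾ = Kⁿ/∼`, where
`x ∼ y` iff `v(x−y) < v(x)` or `x = y = 0`. -/
def rvEq (v : Valuation K Γ) {n : ℕ} (x y : Fin n → K) : Prop :=
  vv v (x - y) < vv v x ∨ (x = 0 ∧ y = 0)

/-- Balls in `K` (with `K` itself counting as a ball). -/
def IsBall1 (v : Valuation K Γ) (B : Set K) : Prop :=
  B = Set.univ ∨ ∃ a : K, ∃ γ : Γ, γ ≠ 0 ∧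
    (B = {x | v (x - a) < γ} ∨ B = {x | v (x - a) ≤ γ})

/-- Balls in `Kⁿ` (with `Kⁿ` itself counting as a ball). -/
def IsBall (v : Valuation K Γ) {n : ℕ} (B : Set (Fin n → K)) : Prop :=
  B = Set.univ ∨ ∃ a : Fin n → K, ∃ γ : Γ, γ ≠ 0 ∧
    (B = {x | vv v (x - a) < γ} ∨ B = {x | vv v (x - a) ≤ γ})

/-- Spherical completeness: every nonempty chain of balls in `K` has nonempty
intersection. -/
def SphericallyComplete (v : Valuation K Γ) : Prop :=
  ∀ C : Set (Set K), C.Nonempty → (∀ B ∈ C, IsBall1 v B) → IsChain (· ⊆ ·) C →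
    (⋂ B ∈ C, B).Nonempty

/-- The residue field `K̄` of the valuation ring `𝒪 = {x | v x ≤ 1}`. -/
def Kbar (v : Valuation K Γ) : Type _ :=
  IsLocalRing.ResidueField v.valuationSubring

instance (v : Valuation K Γ) : Field (Kbar v) :=
  inferInstanceAs (Field (IsLocalRing.ResidueField v.valuationSubring))

/-- The residue map `res : 𝒪 → K̄`, extended by the junk value `0` outside `𝒪`. -/
def res' (v : Valuation K Γ) (x : K) : Kbar v :=
  if h : v x ≤ 1 then IsLocalRing.residue v.valuationSubring ⟨x, h⟩ else 0

/-- The coordinatewise residue map on `Kⁿ`. -/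
def resv (v : Valuation K Γ) {n : ℕ} (x : Fin n → K) : Fin n → Kbar v :=
  fun i => res' v (x i)

/-- `res(S)` for a set `S ⊆ Kⁿ`: the set of residues of points of `S ∩ 𝒪ⁿ`. -/
def resSet (v : Valuation K Γ) {n : ℕ} (S : Set (Fin n → K)) : Set (Fin n → Kbar v) :=
  resv v '' {x ∈ S | ∀ i, v (x i) ≤ 1}

/-- `dir(x) = res(K·x) ⊆ K̄ⁿ`. -/
def dirSet (v : Valuation K Γ) {n : ℕ} (x : Fin n → K) : Set (Fin n → Kbar v) :=
  resSet v {y | ∃ c : K, y = c • x}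

/-- The coordinate projection `Kⁿ → K^d` selecting the coordinates `σ 0 < σ 1 < ⋯`. -/
def proj {A : Type*} {n d : ℕ} (σ : Fin d → Fin n) (x : Fin n → A) : Fin d → A :=
  fun k => x (σ k)

/-- `σ` (a strictly increasing selection of `d` of the `n` coordinates) is an
exhibition of the `K̄`-subspace `Ū ⊆ K̄ⁿ` if the corresponding coordinate projection
`K̄ⁿ → K̄^d` restricts to an isomorphism from `Ū` onto `K̄^d`. -/
def IsExhibition (v : Valuation K Γ) {n d : ℕ} (σ : Fin d → Fin n)
    (Ubar : Submodule (Kbar v) (Fin n → Kbar v)) : Prop :=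
  StrictMono σ ∧ Set.BijOn (proj σ) (Ubar : Set (Fin n → Kbar v)) Set.univ

/-- `affdir(C)`: the `K̄`-subspace of `K̄ⁿ` generated by all `dir(x − x')`, `x, x' ∈ C`. -/
def affdir (v : Valuation K Γ) {n : ℕ} (C : Set (Fin n → K)) :
    Submodule (Kbar v) (Fin n → Kbar v) :=
  Submodule.span (Kbar v) (⋃ x ∈ C, ⋃ x' ∈ C, dirSet v (x - x'))

/-- A matrix has entries in the valuation ring `𝒪`. -/
def EntriesInO (v : Valuation K Γ) {n : ℕ} (M : Matrix (Fin n) (Fin n) K) : Prop :=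
  ∀ i j, v (M i j) ≤ 1

/-- `M ∈ GLₙ(𝒪)`: `M` is invertible, with entries in `𝒪`, and its inverse also has
entries in `𝒪`. -/
def MemGLO (v : Valuation K Γ) {n : ℕ} (M : Matrix (Fin n) (Fin n) K) : Prop :=
  EntriesInO v M ∧ ∃ N : Matrix (Fin n) (Fin n) K,
    M * N = 1 ∧ N * M = 1 ∧ EntriesInO v N

/-- The entrywise residue matrix of `M`. -/
def resM (v : Valuation K Γ) {n : ℕ} (M : Matrix (Fin n) (Fin n) K) :
    Matrix (Fin n) (Fin n) (Kbar v) :=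
  fun i j => res' v (M i j)

/-- `DeltaLE v U W γ` expresses `Δ(U, W) ≤ γ`: for every `u ∈ U` there is `w ∈ W`
with `v(u − w) ≤ v(u)·γ`. -/
def DeltaLE (v : Valuation K Γ) {n : ℕ} (U W : Submodule K (Fin n → K)) (γ : Γ) : Prop :=
  ∀ u ∈ U, ∃ w ∈ W, vv v (u - w) ≤ vv v u * γ

/-- `IsDelta v U W γ` expresses `Δ(U, W) = γ`: `γ` is the minimum of all admissible
bounds. -/
def IsDelta (v : Valuation K Γ) {n : ℕ} (U W : Submodule K (Fin n → K)) (γ : Γ) : Prop :=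
  DeltaLE v U W γ ∧ ∀ δ : Γ, DeltaLE v U W δ → γ ≤ δ

end Preamble

variable {K : Type*} [Field K] {Γ : Type*} [LinearOrderedCommGroupWithZero Γ]


section BanachHelpers

variable {K : Type*} [Field K] {Γ : Type*} [LinearOrderedCommGroupWithZero Γ]

lemma vv_le_iff' (v : Valuation K Γ) {n : ℕ} (x : Fin n → K) (γ : Γ) :
    vv v x ≤ γ ↔ ∀ i, v (x i) ≤ γ := by
  simp [vv, Finset.sup_le_iff]

lemma vv_eq_zero' (v : Valuation K Γ) {n : ℕ} {x : Fin n → K} (h : vv v x = 0) : x = 0 := by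
  funext i
  have := ((vv_le_iff' v x 0).mp h.le) i
  have hv : v (x i) = 0 := le_antisymm this zero_le'
  simpa using v.zero_iff.mp hv

lemma vv_sub_swap (v : Valuation K Γ) {n : ℕ} (x y : Fin n → K) :
    vv v (x - y) = vv v (y - x) := by
  simp only [vv, Pi.sub_apply]
  congr 1
  funext i
  exact v.map_sub_swap _ _

lemma vv_triangle (v : Valuation K Γ) {n : ℕ} (x y z : Fin n → K) :
    vv v (x - z) ≤ max (vv v (x - y)) (vv v (y - z)) := by
  rw [vv_le_iff']
  intro i
  have : x i - z i = (x i - y i) + (y i - z i) := by ring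
  rw [Pi.sub_apply, this]
  refine (v.map_add _ _).trans (max_le_max ?_ ?_)
  · exact (vv_le_iff' v (x - y) _).mp le_rfl i
  · exact (vv_le_iff' v (y - z) _).mp le_rfl i

lemma v_triangle (v : Valuation K Γ) (x y z : K) :
    v (x - z) ≤ max (v (x - y)) (v (y - z)) := by
  have : x - z = (x - y) + (y - z) := by ring
  rw [this]
  exact v.map_add _ _

lemma ball_recenter_lt (v : Valuation K Γ) {a b : K} {γ : Γ} (h : v (b - a) < γ) :
    {x : K | v (x - a) < γ} = {x | v (x - b) < γ} := by
  ext x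
  constructor
  · intro hx
    exact lt_of_le_of_lt (v_triangle v x a b) (max_lt hx (by rwa [v.map_sub_swap]))
  · intro hx
    exact lt_of_le_of_lt (v_triangle v x b a) (max_lt hx h)

lemma ball_recenter_le (v : Valuation K Γ) {a b : K} {γ : Γ} (h : v (b - a) ≤ γ) :
    {x : K | v (x - a) ≤ γ} = {x | v (x - b) ≤ γ} := by
  ext x
  constructor
  · intro hx
    exact le_trans (v_triangle v x a b) (max_le hx (by rwa [v.map_sub_swap]))
  · intro hx
    exact le_trans (v_triangle v x b a) (max_le hx h)

lemma isBall1_inter_closed (v : Valuation K Γ) {B : Set K} (hB : IsBall1 v B)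
    {c : K} (hc : c ∈ B) {γ : Γ} (hγ : γ ≠ 0) :
    IsBall1 v {t | t ∈ B ∧ v (t - c) ≤ γ} := by
  rcases hB with rfl | ⟨a, δ, hδ, rfl | rfl⟩
  · refine Or.inr ⟨c, γ, hγ, Or.inr ?_⟩
    ext t; simp
  · have hca : v (c - a) < δ := hc
    have hBc : {x : K | v (x - a) < δ} = {x | v (x - c) < δ} := ball_recenter_lt v hca
    rcases lt_or_ge γ δ with hlt | hle
    · refine Or.inr ⟨c, γ, hγ, Or.inr ?_⟩
      ext t
      simp only [Set.mem_setOf_eq, hBc]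
      exact ⟨fun h => h.2, fun h => ⟨lt_of_le_of_lt h hlt, h⟩⟩
    · refine Or.inr ⟨c, δ, hδ, Or.inl ?_⟩
      ext t
      simp only [Set.mem_setOf_eq, hBc]
      exact ⟨fun h => h.1, fun h => ⟨h, le_trans h.le hle⟩⟩
  · have hca : v (c - a) ≤ δ := hc
    have hBc : {x : K | v (x - a) ≤ δ} = {x | v (x - c) ≤ δ} := ball_recenter_le v hca
    have hmin : min γ δ ≠ 0 := by
      rcases min_choice γ δ with h | h <;> rw [h] <;> assumption
    refine Or.inr ⟨c, min γ δ, hmin, Or.inr ?_⟩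
    ext t
    simp only [Set.mem_setOf_eq, hBc, le_min_iff]
    tauto

end BanachHelpers

/-- Banach fixed point for a product of balls:
If `E = B₁ × ⋯ × Bₙ ⊆ Kⁿ` is a product of balls and `f : E → E` is contracting
(`v(f x − f y) < v(x − y)` for `x ≠ y` in `E`), then `f` has exactly one fixed point. -/
theorem banach_fixed_point_product_of_balls
    (v : Valuation K Γ) (hK : SphericallyComplete v) {n : ℕ}
    (B : Fin n → Set K) (hB : ∀ i, IsBall1 v (B i))
    (E : Set (Fin n → K)) (hE : E = {x | ∀ i, x i ∈ B i})
    (f : (Fin n → K) → Fin n → K) (hfE : ∀ x ∈ E, f x ∈ E)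
    (hf : ∀ x ∈ E, ∀ y ∈ E, x ≠ y → vv v (f x - f y) < vv v (x - y)) :
    ∃! x, x ∈ E ∧ f x = x := by
  subst hE
  -- each ball is nonempty
  have hBne : ∀ i, (B i).Nonempty := by
    intro i
    rcases hB i with h | ⟨a, γ, hγ, h | h⟩
    · exact h ▸ Set.univ_nonempty
    · exact ⟨a, by simp [h, zero_lt_iff, hγ]⟩
    · exact ⟨a, by simp [h]⟩
  choose x0 hx0 using hBne
  have hx0E : x0 ∈ {x | ∀ i, x i ∈ B i} := hx0
  -- uniqueness
  have uniq : ∀ x ∈ {x | ∀ i, x i ∈ B i}, f x = x →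
      ∀ y ∈ {x | ∀ i, x i ∈ B i}, f y = y → y = x := by
    intro x hx hfx y hy hfy
    by_contra hne
    have := hf y hy x hx hne
    rw [hfx, hfy] at this
    exact lt_irrefl _ this
  suffices hex : ∃ x, x ∈ {x | ∀ i, x i ∈ B i} ∧ f x = x by
    obtain ⟨x, hx⟩ := hex
    exact ⟨x, hx, fun y hy => uniq x hx.1 hx.2 y hy.1 hy.2⟩
  by_contra hno
  push_neg at hno
  set E : Set (Fin n → K) := {x | ∀ i, x i ∈ B i} with hEdef
  set r : (Fin n → K) → Γ := fun x => vv v (f x - x) with hrdef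
  have hrpos : ∀ x ∈ E, r x ≠ 0 := by
    intro x hx h0
    exact hno x hx (by have := vv_eq_zero' v h0; rwa [sub_eq_zero] at this)
  set Dc : (Fin n → K) → Fin n → Set K :=
    fun x i => {t | t ∈ B i ∧ v (t - x i) ≤ r x} with hDcdef
  set D : (Fin n → K) → Set (Fin n → K) :=
    fun x => {w | w ∈ E ∧ vv v (w - x) ≤ r x} with hDdef
  have memD : ∀ x w, w ∈ D x ↔ ∀ i, w i ∈ Dc x i := by
    intro x w
    constructor
    · intro ⟨hwE, hw⟩ i
      exact ⟨hwE i, (vv_le_iff' v (w - x) (r x)).mp hw i⟩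
    · intro h
      exact ⟨fun i => (h i).1, (vv_le_iff' v (w - x) (r x)).mpr fun i => (h i).2⟩
  have hself : ∀ x ∈ E, x ∈ D x := by
    intro x hx
    refine ⟨hx, ?_⟩
    rw [vv_le_iff']
    intro i
    simp [zero_le']
  have hfD : ∀ x ∈ E, f x ∈ D x := fun x hx => ⟨hfE x hx, le_rfl⟩
  have key2 : ∀ x ∈ E, ∀ y ∈ D x, D y ⊆ D x := by
    intro x hx y hy w hw
    have hyE : y ∈ E := hy.1
    have hyx : vv v (y - x) ≤ r x := hy.2
    have hry : r y ≤ r x := by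
      rcases eq_or_ne y x with rfl | hne
      · exact le_rfl
      · have h1 : vv v (f y - f x) < vv v (y - x) := hf y hyE x hx hne
        have h2 : vv v (f y - y) ≤ max (vv v (f y - f x)) (vv v (f x - y)) :=
          vv_triangle v _ _ _
        have h3 : vv v (f x - y) ≤ max (vv v (f x - x)) (vv v (x - y)) :=
          vv_triangle v _ _ _
        have h4 : vv v (x - y) ≤ r x := by rwa [vv_sub_swap]
        calc r y = vv v (f y - y) := rfl
          _ ≤ max (vv v (f y - f x)) (vv v (f x - y)) := h2
          _ ≤ r x := max_le ((h1.trans_le hyx).le)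
              (h3.trans (max_le le_rfl h4))
    refine ⟨hw.1, ?_⟩
    calc vv v (w - x) ≤ max (vv v (w - y)) (vv v (y - x)) := vv_triangle v _ _ _
      _ ≤ r x := max_le (hw.2.trans hry) hyx
  have key3 : ∀ x ∈ E, r (f x) < r x := by
    intro x hx
    exact hf (f x) (hfE x hx) x hx (hno x hx)
  have hDc_ball : ∀ x ∈ E, ∀ i, IsBall1 v (Dc x i) :=
    fun x hx i => isBall1_inter_closed v (hB i) (hx i) (hrpos x hx)
  have hDcmono : ∀ x ∈ E, ∀ y ∈ E, D x ⊆ D y → ∀ i, Dc x i ⊆ Dc y i := by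
    intro x hx y hy hxy i t ht
    have hu : Function.update x i t ∈ D x := by
      rw [memD]
      intro j
      rcases eq_or_ne j i with rfl | hji
      · simpa using ht
      · simp only [Function.update_of_ne hji]
        exact ⟨hx j, by simp [zero_le']⟩
    have := hxy hu
    have h2 := (memD y _).mp this i
    simpa using h2
  -- Zorn's lemma
  have hchains : ∀ c ⊆ D '' E, IsChain (· ⊆ ·) c → ∃ lb ∈ D '' E, ∀ s ∈ c, lb ⊆ s := by
    intro c hcS hchain
    rcases c.eq_empty_or_nonempty with rfl | ⟨s0, hs0⟩
    · exact ⟨D x0, Set.mem_image_of_mem D hx0E, by simp⟩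
    · have hg : ∀ s ∈ c, ∃ x, x ∈ E ∧ D x = s := fun s hs => hcS hs
      choose g hgE hgD using hg
      have hCi : ∀ i : Fin n, (⋂ A ∈ {A | ∃ s, ∃ hs : s ∈ c, A = Dc (g s hs) i}, A).Nonempty := by
        intro i
        refine hK _ ⟨Dc (g s0 hs0) i, ⟨s0, hs0, rfl⟩⟩ ?_ ?_
        · rintro A ⟨s, hs, rfl⟩
          exact hDc_ball _ (hgE s hs) i
        · rintro A ⟨s, hs, rfl⟩ A' ⟨s', hs', rfl⟩ _
          rcases eq_or_ne s s' with rfl | hne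
          · left; exact subset_rfl
          · rcases hchain hs hs' hne with h | h
            · left
              exact hDcmono _ (hgE s hs) _ (hgE s' hs')
                (by rw [hgD s hs, hgD s' hs']; exact h) i
            · right
              exact hDcmono _ (hgE s' hs') _ (hgE s hs)
                (by rw [hgD s hs, hgD s' hs']; exact h) i
      choose z hz using hCi
      have hzmem : ∀ s (hs : s ∈ c), (fun i => z i) ∈ D (g s hs) := by
        intro s hs
        rw [memD]
        intro i
        exact Set.mem_iInter₂.mp (hz i) (Dc (g s hs) i) ⟨s, hs, rfl⟩
      have hzE : (fun i => z i) ∈ E := (hzmem s0 hs0).1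
      refine ⟨D (fun i => z i), Set.mem_image_of_mem D hzE, ?_⟩
      intro s hs
      have := key2 (g s hs) (hgE s hs) _ (hzmem s hs)
      rwa [hgD s hs] at this
  obtain ⟨m, hm⟩ := zorn_superset (D '' E) hchains
  · obtain ⟨xm, hxmE, rfl⟩ := hm.1
    have hsub : D (f xm) ⊆ D xm := key2 xm hxmE (f xm) (hfD xm hxmE)
    have heq : D xm ⊆ D (f xm) :=
      hm.2 (Set.mem_image_of_mem D (hfE xm hxmE)) hsub
    have hmem : xm ∈ D (f xm) := heq (hself xm hxmE)
    have h1 : vv v (xm - f xm) ≤ r (f xm) := hmem.2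
    have h2 : r (f xm) < r xm := key3 xm hxmE
    have h3 : vv v (xm - f xm) = r xm := vv_sub_swap v _ _
    have h4 := h1.trans_lt h2
    rw [h3] at h4
    exact lt_irrefl _ h4
end
end

section
/- Suppose x₁, x₂ ∈ Kⁿ satisfy dir(x₁) ∩ dir(x₂) = 0. Then dir(x₁ + x₂) ⊆ dir(x₁) + dir(x₂). -/
/-!
Write a point of `dir(x₁ + x₂)` as `res(c x₁ + c x₂)`. If `c x₁` and `c x₂` both lie
in `𝒪ⁿ`, the residue map is additive on them and we are done. Otherwise let `d` be a
coordinate of `c x₁` of maximal valuation, which is `> 1`. Then `d⁻¹ c x₁ ∈ 𝒪ⁿ` has a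
coordinate equal to `1`, while `d⁻¹ c (x₁ + x₂) ∈ 𝔪ⁿ`; hence `res(d⁻¹ c x₁) = res(-d⁻¹ c x₂)`
is a nonzero vector of `dir(x₁) ∩ dir(x₂)`.
-/

noncomputable section

open scoped Classical Pointwise

variable {K : Type*} [Field K] {Γ : Type*} [LinearOrderedCommGroupWithZero Γ]

section

variable (v : Valuation K Γ) {n : ℕ}

lemma res'_of_le_one {x : K} (hx : v x ≤ 1) :
    res' v x = (IsLocalRing.residue v.valuationSubring ⟨x, hx⟩ : Kbar v) :=
  dif_pos hx

lemma res'_one : res' v 1 = 1 := by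
  rw [res'_of_le_one v v.map_one.le]
  exact map_one (IsLocalRing.residue v.valuationSubring)

lemma res'_add {x y : K} (hx : v x ≤ 1) (hy : v y ≤ 1) :
    res' v (x + y) = res' v x + res' v y := by
  rw [res'_of_le_one v ((v.map_add x y).trans (max_le hx hy)), res'_of_le_one v hx,
    res'_of_le_one v hy]
  exact map_add (IsLocalRing.residue v.valuationSubring) ⟨x, hx⟩ ⟨y, hy⟩

lemma res'_eq_zero_of_lt_one {x : K} (hx : v x < 1) : res' v x = 0 := by
  rw [res'_of_le_one v hx.le]
  exact (IsLocalRing.residue_eq_zero_iff _).mpr ((v.mem_maximalIdeal_iff).mpr hx)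

lemma res'_sub_of_lt_one {x y : K} (hx : v x ≤ 1) (hy : v y < 1) :
    res' v (x - y) = res' v x := by
  have hy' : v (-y) ≤ 1 := (v.map_neg y).trans_le hy.le
  rw [sub_eq_add_neg, res'_add v hx hy', res'_eq_zero_of_lt_one v ((v.map_neg y).trans_lt hy),
    add_zero]

lemma resv_add {x y : Fin n → K} (hx : ∀ i, v (x i) ≤ 1) (hy : ∀ i, v (y i) ≤ 1) :
    resv v (x + y) = resv v x + resv v y :=
  funext fun i => res'_add v (hx i) (hy i)

lemma resv_smul_mem_dirSet {c : K} {x : Fin n → K} (hc : ∀ i, v ((c • x) i) ≤ 1) :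
    resv v (c • x) ∈ dirSet v x :=
  ⟨c • x, ⟨⟨c, rfl⟩, hc⟩, rfl⟩

lemma dirSet_smul_subset (c : K) (x : Fin n → K) : dirSet v (c • x) ⊆ dirSet v x := by
  rintro _ ⟨_, ⟨⟨d, rfl⟩, hd⟩, rfl⟩
  rw [smul_smul] at hd ⊢
  exact resv_smul_mem_dirSet v hd

lemma le_one_of_dirSet_inter_subset {a b : Fin n → K} (h : dirSet v a ∩ dirSet v b ⊆ {0})
    (hab : ∀ i, v ((a + b) i) ≤ 1) (i : Fin n) : v (a i) ≤ 1 := by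
  by_contra! hi
  have : Nonempty (Fin n) := ⟨i⟩
  obtain ⟨j, hj⟩ := Finite.exists_max fun i => v (a i)
  set d := a j
  have hd : 1 < v d := hi.trans_le (hj i)
  have hd₀ : d ≠ 0 := v.ne_zero_iff.mp (zero_lt_one.trans hd).ne'
  have hu : ∀ i, v ((d⁻¹ • a) i) ≤ 1 := fun i => by
    rw [Pi.smul_apply, smul_eq_mul, v.map_mul, map_inv₀, inv_mul_le_one₀ (zero_lt_one.trans hd)]
    exact hj i
  have hw : ∀ i, v ((d⁻¹ • (a + b)) i) < 1 := fun i => by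
    rw [Pi.smul_apply, smul_eq_mul, v.map_mul, map_inv₀]
    calc (v d)⁻¹ * v ((a + b) i) ≤ (v d)⁻¹ := mul_le_of_le_one_right' (hab i)
      _ < 1 := inv_lt_one_of_one_lt₀ hd
  have hb : (-d⁻¹) • b = d⁻¹ • a - d⁻¹ • (a + b) := by
    rw [smul_add, sub_add_cancel_left, neg_smul]
  have hres : resv v ((-d⁻¹) • b) = resv v (d⁻¹ • a) := by
    rw [hb]
    exact funext fun i => res'_sub_of_lt_one v (hu i) (hw i)
  have hb_int : ∀ i, v (((-d⁻¹) • b) i) ≤ 1 := fun i => by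
    rw [hb]
    exact (v.map_sub _ _).trans (max_le (hu i) (hw i).le)
  have hmem : resv v (d⁻¹ • a) ∈ dirSet v a ∩ dirSet v b :=
    ⟨resv_smul_mem_dirSet v hu, hres ▸ resv_smul_mem_dirSet v hb_int⟩
  have hj_one : resv v (d⁻¹ • a) j = 1 := by
    change res' v (d⁻¹ * d) = 1
    rw [inv_mul_cancel₀ hd₀, res'_one]
  exact one_ne_zero (hj_one.symm.trans (congrFun (h hmem) j))

end

/-- if `dir x₁ ∩ dir x₂ = 0`, then
`dir (x₁ + x₂) ⊆ dir x₁ + dir x₂`. -/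
theorem dirSet_add_subset
    (v : Valuation K Γ) {n : ℕ} (x₁ x₂ : Fin n → K)
    (h : dirSet v x₁ ∩ dirSet v x₂ = {0}) :
    dirSet v (x₁ + x₂) ⊆ dirSet v x₁ + dirSet v x₂ := by
  rintro _ ⟨_, ⟨⟨c, rfl⟩, hc⟩, rfl⟩
  have hc_inter : dirSet v (c • x₁) ∩ dirSet v (c • x₂) ⊆ {0} :=
    h ▸ Set.inter_subset_inter (dirSet_smul_subset v c x₁) (dirSet_smul_subset v c x₂)
  rw [smul_add] at hc ⊢
  have h₁ := le_one_of_dirSet_inter_subset v hc_inter hc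
  have h₂ := le_one_of_dirSet_inter_subset v (Set.inter_comm _ _ ▸ hc_inter)
    (add_comm (c • x₁) _ ▸ hc)
  rw [resv_add v h₁ h₂]
  exact Set.add_mem_add (resv_smul_mem_dirSet v h₁) (resv_smul_mem_dirSet v h₂)

end
end
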